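/- For all integers q ≥ 2 and n ≥ 1, and under each of the scenarios (∗◦), (◦∗), (∗∗), and (•∗), the whole set F_q is n-cell implementable if and only if q ≤ n. -/

import Mathlib

/-- The alphabet 𝔹• = {0, 1, ∗, •}. -/
inductive BB : Type
  | zero
  | one
  | star
  | reject
deriving DecidableEq

instance instFintypeBB : Fintype BB where
  elems := {BB.zero, BB.one, BB.star, BB.reject}
  complete := by
    intro x
    cases x <;> simp

/-- The cell function T : 𝔹• × 𝔹• → 𝔹: T(u,ϑ) = 1 iff u = ∗, or ϑ = ∗,
or u,ϑ ∈ 𝔹 with u = ϑ. -/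
def Tcell : BB → BB → Bool
  | BB.star, _ => true
  | _, BB.star => true
  | BB.zero, BB.zero => true
  | BB.one, BB.one => true
  | _, _ => false

/-- The word-level function T(u,ϑ) = ⋀_{j<n} T(u_j, ϑ_j). -/
def Tword {n : ℕ} (u θ : Fin n → BB) : Bool :=
  decide (∀ j, Tcell (u j) (θ j) = true)

/-- The alphabet 𝔹 = {0,1} ⊆ 𝔹•. -/
def Bcirc : Set BB := {BB.zero, BB.one}

/-- The alphabet 𝔹∗ = {0,1,∗} ⊆ 𝔹•. -/
def Bstar : Set BB := {BB.zero, BB.one, BB.star}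

/-- The full alphabet 𝔹•. -/
def Bdot : Set BB := Set.univ

/-- A family Φ of functions {0,…,q−1} → 𝔹 is n-cell implementable under
scenario (A,B) if there are mappings u : {0,…,q−1} → A^n and ϑ : Φ → B^n
with f(x) = T(u(x), ϑ(f)) for all f ∈ Φ and x. -/
def Implementable (A B : Set BB) (n q : ℕ) (Φ : Set (Fin q → Bool)) : Prop :=
  ∃ u : Fin q → Fin n → BB, ∃ θ : (Fin q → Bool) → Fin n → BB,
    (∀ x j, u x j ∈ A) ∧ (∀ f ∈ Φ, ∀ j, θ f j ∈ B) ∧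
    (∀ f ∈ Φ, ∀ x, f x = Tword (u x) (θ f))

/-- The family 𝓔_q = { x ↦ [x = t] : t ∈ [q⟩ }. -/
def Eset (q : ℕ) : Set (Fin q → Bool) :=
  { f | ∃ t : Fin q, f = fun x => decide (x = t) }

/-- The family 𝓝_q = { x ↦ [x ≠ t] : t ∈ [q⟩ }. -/
def Nset (q : ℕ) : Set (Fin q → Bool) :=
  { f | ∃ t : Fin q, f = fun x => decide (x ≠ t) }

/-- The family 𝓖_q = { x ↦ [x ≥ t] : t ∈ [q⟩ }. -/
def Gset (q : ℕ) : Set (Fin q → Bool) :=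
  { f | ∃ t : Fin q, f = fun x => decide (t ≤ x) }

/-- The family 𝓛_q = { x ↦ [x ≤ t] : t ∈ [q⟩ }. -/
def Lset (q : ℕ) : Set (Fin q → Bool) :=
  { f | ∃ t : Fin q, f = fun x => decide (x ≤ t) }

/-!
The constructions for `q ≤ n` are diagonal: cell `x` alone decides the value at input `x`.

For the converse, as long as patterns avoid `•`, the zero set of every implemented function is a
union of at most one literal `{x | T(u x j, b) = 0}` per cell `j`, so every subset of `[q⟩` must be
such a union. Each singleton is then itself a literal. If `q > n`, by pigeonhole some cell has the
two literals `{x}` and `{y}` with `x ≠ y`; identifying `x` with `y` makes that cell redundant and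
leaves a system with one cell and one point fewer, so induction gives `q ≤ n`.
-/

open Finset

section CellUnion

variable {ι α : Type*}

def IsCellUnion (L : ι → Bool → Set α) (C : Finset ι) (S : Set α) : Prop :=
  ∃ s ⊆ C, ∃ b : ι → Bool, S = ⋃ j ∈ s, L j (b j)

variable {L : ι → Bool → Set α} {C : Finset ι}

theorem IsCellUnion.exists_eq_singleton {t : α} (h : IsCellUnion L C {t}) :
    ∃ j ∈ C, ∃ b, L j b = {t} := by
  obtain ⟨s, hsC, b, hs⟩ := h
  have ht : t ∈ ⋃ j ∈ s, L j (b j) := hs ▸ rfl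
  obtain ⟨j, hj, htj⟩ : ∃ j ∈ s, t ∈ L j (b j) := by simpa using ht
  refine ⟨j, hsC hj, b j, Set.Subset.antisymm ?_ (Set.singleton_subset_iff.2 htj)⟩
  exact hs ▸ Set.subset_biUnion_of_mem (u := fun j => L j (b j)) (Finset.mem_coe.2 hj)

variable [DecidableEq ι] [DecidableEq α]

/-- Contracting along a cell whose two literals are `{x}` and `{y}`: identifying `x` with `y`
makes the cell redundant. -/
theorem isCellUnion_image_update_of_pair {U : Finset α} {j₀ : ι} {x y : α} (hxU : x ∈ U)
    (hxy : x ≠ y) (hx : L j₀ true = {x}) (hy : L j₀ false = {y})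
    (h : ∀ S ⊆ (U : Set α), IsCellUnion L C S) {S : Set α} (hS : S ⊆ (U.erase x : Set α)) :
    IsCellUnion (fun j b => Function.update id x y '' L j b) (C.erase j₀) S := by
  set π : α → α := Function.update id x y
  have hπx : π x = y := Function.update_self x y id
  have hπ : ∀ z ≠ x, π z = z := fun z hz => Function.update_of_ne hz y id
  have hxS : x ∉ S := fun hx => by simpa using hS hx
  have hS₀U : π ⁻¹' S ⊆ U := by
    intro z hz
    by_cases hzx : z = x
    · exact hzx ▸ hxU
    · exact Finset.mem_of_mem_erase (hS (hπ z hzx ▸ hz))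
  have himage : π '' (π ⁻¹' S) = S :=
    Set.image_preimage_eq_of_subset fun z hz => ⟨z, hπ z fun h => hxS (h ▸ hz)⟩
  obtain ⟨s, hsC, b, hs⟩ := h _ hS₀U
  refine ⟨s.erase j₀, Finset.erase_subset_erase _ hsC, b, ?_⟩
  rw [← himage, hs, Set.image_iUnion₂]
  by_cases hj₀ : j₀ ∈ s
  swap
  · rw [Finset.erase_eq_of_notMem hj₀]
  conv_lhs => rw [← Finset.insert_erase hj₀, Finset.set_biUnion_insert]
  refine Set.union_eq_self_of_subset_left ?_
  have hL₀ : L j₀ (b j₀) ⊆ π ⁻¹' S := hs ▸ Set.subset_biUnion_of_mem (u := fun j => L j (b j)) hj₀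
  -- the element of `{x, y}` not in the literal used at `j₀` is covered by another cell
  obtain ⟨z, hπz, hzS, hzL⟩ : ∃ z, π z = y ∧ π z ∈ S ∧ z ∉ L j₀ (b j₀) := by
    cases hb : b j₀
    · rw [hb, hy, Set.singleton_subset_iff, Set.mem_preimage, hπ y hxy.symm] at hL₀
      exact ⟨x, hπx, hπx ▸ hL₀, by simp [hy, hxy]⟩
    · rw [hb, hx, Set.singleton_subset_iff, Set.mem_preimage, hπx] at hL₀
      exact ⟨y, hπ y hxy.symm, (hπ y hxy.symm).symm ▸ hL₀, by simp [hx, hxy.symm]⟩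
  have hz : z ∈ ⋃ j ∈ s, L j (b j) := hs ▸ hzS
  obtain ⟨j, hj, hzj⟩ : ∃ j ∈ s, z ∈ L j (b j) := by simpa using hz
  have hjj₀ : j ≠ j₀ := by rintro rfl; exact hzL hzj
  have hM : π '' L j₀ (b j₀) = {y} := by cases b j₀ <;> simp [hx, hy, hπx, hπ y hxy.symm]
  rw [hM, Set.singleton_subset_iff, Set.mem_iUnion₂]
  exact ⟨j, Finset.mem_erase.2 ⟨hjj₀, hj⟩, hπz ▸ Set.mem_image_of_mem π hzj⟩

theorem card_le_card_of_forall_isCellUnion (L : ι → Bool → Set α) (C : Finset ι) (U : Finset α)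
    (h : ∀ S ⊆ (U : Set α), IsCellUnion L C S) : #U ≤ #C := by
  induction C using Finset.strongInduction generalizing L U with
  | H C ih =>
  by_contra! hlt
  have hsingle (t : U) : ∃ j ∈ C, ∃ b, L j b = {t.1} :=
    (h {t.1} (by simp)).exists_eq_singleton
  choose φ hφC b hb using hsingle
  obtain ⟨t, -, t', -, htt', hφ⟩ :=
    Finset.exists_ne_map_eq_of_card_lt_of_maps_to (s := U.attach) (by simpa using hlt)
      (fun t _ => hφC t)
  -- pigeonhole: some cell has two distinct singleton literals
  obtain ⟨x, y, hxU, hxy, hx, hy⟩ :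
      ∃ x y, x ∈ U ∧ x ≠ y ∧ L (φ t) true = {x} ∧ L (φ t) false = {y} := by
    have hbt := hb t
    have hbt' := hb t'
    rw [← hφ] at hbt'
    have hne : t.1 ≠ t'.1 := fun h => htt' (Subtype.ext h)
    cases h1 : b t <;> cases h2 : b t' <;> rw [h1] at hbt <;> rw [h2] at hbt'
    · exact absurd (Set.singleton_injective (hbt.symm.trans hbt')) hne
    · exact ⟨t', t, t'.2, hne.symm, hbt', hbt⟩
    · exact ⟨t, t', t.2, hne, hbt, hbt'⟩
    · exact absurd (Set.singleton_injective (hbt.symm.trans hbt')) hne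
  have hcard := ih _ (Finset.erase_ssubset (hφC t)) _ _
    fun S hS => isCellUnion_image_update_of_pair hxU hxy hx hy h hS
  rw [Finset.card_erase_of_mem hxU, Finset.card_erase_of_mem (hφC t)] at hcard
  have hC := Finset.card_pos.2 ⟨_, hφC t⟩
  omega

end CellUnion

def BB.ofBool : Bool → BB
  | false => BB.zero
  | true => BB.one

theorem eq_star_or_eq_ofBool_of_mem_Bstar {v : BB} (hv : v ∈ Bstar) :
    v = BB.star ∨ v = BB.ofBool (v = BB.one) := by
  rcases hv with rfl | rfl | rfl <;> simp [BB.ofBool]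

@[simp]
theorem Tcell_star_right (v : BB) : Tcell v BB.star = true := by
  cases v <;> rfl

theorem Tword_eq_false_iff {n : ℕ} {u θ : Fin n → BB} :
    Tword u θ = false ↔ ∃ j, Tcell (u j) (θ j) = false := by
  simp [Tword]

theorem Tword_eq_Tcell_of_forall_ne {n : ℕ} {u θ : Fin n → BB} (j₀ : Fin n)
    (h : ∀ j ≠ j₀, Tcell (u j) (θ j) = true) : Tword u θ = Tcell (u j₀) (θ j₀) := by
  cases hj₀ : Tcell (u j₀) (θ j₀)
  · exact Tword_eq_false_iff.2 ⟨j₀, hj₀⟩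
  · simp only [Tword, decide_eq_true_eq]
    intro j
    by_cases hj : j = j₀
    · exact hj ▸ hj₀
    · exact h j hj

theorem isCellUnion_setOf_Tword_eq_false {α : Type*} {n : ℕ} (u : α → Fin n → BB)
    {θ : Fin n → BB} (hθ : ∀ j, θ j ∈ Bstar) :
    IsCellUnion (fun j b => {x | Tcell (u x j) (BB.ofBool b) = false}) univ
      {x | Tword (u x) θ = false} := by
  refine ⟨univ.filter (θ · ≠ BB.star), subset_univ _, fun j => θ j = BB.one, ?_⟩
  ext x
  simp only [Set.mem_ofPred_eq, Tword_eq_false_iff, Set.mem_iUnion, Finset.mem_filter,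
    Finset.mem_univ, true_and, exists_prop]
  refine exists_congr fun j => ?_
  rcases eq_star_or_eq_ofBool_of_mem_Bstar (hθ j) with hj | hj
  · simp [hj]
  · rw [← hj]
    constructor
    · intro hT
      exact ⟨fun hs => by simp [hs] at hT, hT⟩
    · exact And.right

theorem Implementable.mono {A A' B B' : Set BB} {n q : ℕ} {Φ : Set (Fin q → Bool)}
    (h : Implementable A B n q Φ) (hA : A ⊆ A') (hB : B ⊆ B') : Implementable A' B' n q Φ :=
  let ⟨u, θ, hu, hθ, hf⟩ := h
  ⟨u, θ, fun x j => hA (hu x j), fun f hf j => hB (hθ f hf j), hf⟩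

theorem Implementable.le_of_subset_Bstar {A B : Set BB} {n q : ℕ} (hB : B ⊆ Bstar)
    (h : Implementable A B n q Set.univ) : q ≤ n := by
  classical
  obtain ⟨u, θ, -, hθ, hf⟩ := h
  have hS (S : Set (Fin q)) : S = {x | Tword (u x) (θ fun x => decide (x ∉ S)) = false} := by
    ext x
    simp [← hf _ (Set.mem_univ _)]
  have hcard := card_le_card_of_forall_isCellUnion _ (univ : Finset (Fin n))
    (univ : Finset (Fin q)) fun S _ =>
      hS S ▸ isCellUnion_setOf_Tword_eq_false u fun j => hB (hθ _ (Set.mem_univ _) j)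
  rwa [Finset.card_fin, Finset.card_fin] at hcard

/-- Diagonal encoding: input `x` carries `1` in cell `x` and the neutral symbol `d` elsewhere,
and the pattern of `f` carries `c (f x)` in cell `x`. -/
theorem implementable_univ_of_le {A B : Set BB} {n q : ℕ} {d : BB} {c : Bool → BB}
    (hone : BB.one ∈ A) (hd : d ∈ A) (hc : ∀ b, c b ∈ B) (hdc : ∀ b, Tcell d (c b) = true)
    (honec : ∀ b, Tcell BB.one (c b) = b) (hqn : q ≤ n) : Implementable A B n q Set.univ := by
  classical
  set e := Fin.castLE hqn
  refine ⟨fun x j => if j = e x then BB.one else d,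
    fun f j => c (Function.extend e f (fun _ => false) j), ?_, fun f _ j => hc _, ?_⟩
  · intro x j
    dsimp only
    split_ifs
    exacts [hone, hd]
  · intro f _ x
    dsimp only
    rw [Tword_eq_Tcell_of_forall_ne (e x) fun j hj => by simp only [if_neg hj, hdc],
      if_pos rfl, (Fin.castLE_injective hqn).extend_apply, honec]

theorem implementable_Bstar_Bcirc_univ {n q : ℕ} (hqn : q ≤ n) :
    Implementable Bstar Bcirc n q Set.univ :=
  implementable_univ_of_le (d := BB.star) (c := BB.ofBool) (by simp [Bstar]) (by simp [Bstar])
    (fun b => by cases b <;> simp [BB.ofBool, Bcirc]) (fun _ => rfl)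
    (fun b => by cases b <;> rfl) hqn

theorem implementable_Bcirc_Bstar_univ {n q : ℕ} (hqn : q ≤ n) :
    Implementable Bcirc Bstar n q Set.univ :=
  implementable_univ_of_le (d := BB.zero) (c := fun b => cond b BB.star BB.zero)
    (by simp [Bcirc]) (by simp [Bcirc]) (fun b => by cases b <;> simp [Bstar])
    (fun b => by cases b <;> rfl) (fun b => by cases b <;> rfl) hqn

theorem Bcirc_subset_Bstar : Bcirc ⊆ Bstar := by
  rintro v (rfl | rfl) <;> simp [Bstar]

theorem Fset_implementable_four_scenarios_general (q n : ℕ) :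
    (Implementable Bstar Bcirc n q Set.univ ↔ q ≤ n) ∧
    (Implementable Bcirc Bstar n q Set.univ ↔ q ≤ n) ∧
    (Implementable Bstar Bstar n q Set.univ ↔ q ≤ n) ∧
    (Implementable Bdot Bstar n q Set.univ ↔ q ≤ n) :=
  ⟨⟨(·.le_of_subset_Bstar Bcirc_subset_Bstar), implementable_Bstar_Bcirc_univ⟩,
    ⟨(·.le_of_subset_Bstar subset_rfl), implementable_Bcirc_Bstar_univ⟩,
    ⟨(·.le_of_subset_Bstar subset_rfl),
      fun h => (implementable_Bcirc_Bstar_univ h).mono Bcirc_subset_Bstar subset_rfl⟩,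
    ⟨(·.le_of_subset_Bstar subset_rfl),
      fun h => (implementable_Bcirc_Bstar_univ h).mono (Set.subset_univ _) subset_rfl⟩⟩

theorem Fset_implementable_four_scenarios (q n : ℕ) (hq : 2 ≤ q) (hn : 1 ≤ n) :
    (Implementable Bstar Bcirc n q Set.univ ↔ q ≤ n) ∧
    (Implementable Bcirc Bstar n q Set.univ ↔ q ≤ n) ∧
    (Implementable Bstar Bstar n q Set.univ ↔ q ≤ n) ∧
    (Implementable Bdot Bstar n q Set.univ ↔ q ≤ n) :=
  Fset_implementable_four_scenarios_general q n
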